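/- Let (X,d) be a compact metric space, f_0,...,f_{m-1} continuous self-maps, φ continuous, and let F(ω,x) = (σω, f_{ω_0}(x)) be the skew product on Σ_m×X with g(ω,x)=φ(x). Then for every n≥1, ε>0 and 0<r<1, Q_n(F,g,ε,r) ≤ K(ε,r)·m^n·Q_n(f_0,...,f_{m-1},φ,ε,r) for some positive constant K(ε,r) depending only on ε and r. -/

import Mathlib

open Filter Topology

section FSG

variable {X : Type*}

/-- Apply the maps of the free semigroup action along a word; the first letter of the
list is applied first. -/
def fw {ι : Type*} (f : ι → X → X) (w : List ι) (x : X) : X :=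
  w.foldl (fun y a => f a y) x

/-- The Birkhoff-type sum `(S_w φ)(x) = ∑_{w' ≤ w} φ(f_{w'} x)`. -/
noncomputable def Sw {ι : Type*} (f : ι → X → X) (φ : X → ℝ) (w : List ι) (x : X) : ℝ :=
  ∑ i ∈ Finset.range w.length, φ (fw f (w.take i) x)

variable [MetricSpace X]

/-- `F` is a `(w, ε, r)`-spanning set for the free semigroup action. -/
def rSpan {ι : Type*} (f : ι → X → X) (w : List ι) (ε r : ℝ) (F : Finset X) : Prop :=
  ∀ x : X, ∃ y ∈ F, (1 - r) * w.length <
    (((Finset.range w.length).filter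
      (fun i => dist (fw f (w.take i) x) (fw f (w.take i) y) < ε)).card : ℝ)

/-- `E` is a `(w, ε, r)`-separated set for the free semigroup action. -/
def rSep {ι : Type*} (f : ι → X → X) (w : List ι) (ε r : ℝ) (E : Finset X) : Prop :=
  ∀ x ∈ E, ∀ y ∈ E, x ≠ y → r * w.length <
    (((Finset.range w.length).filter
      (fun i => ε ≤ dist (fw f (w.take i) x) (fw f (w.take i) y))).card : ℝ)

/-- `Q_w(f_0,…,f_{m-1},φ,ε,r)` (spanning-set version). -/
noncomputable def Qw {ι : Type*} (f : ι → X → X) (φ : X → ℝ) (w : List ι) (ε r : ℝ) : ℝ :=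
  sInf {s : ℝ | ∃ F : Finset X, rSpan f w ε r F ∧ s = ∑ x ∈ F, Real.exp (Sw f φ w x)}

/-- `Q_w^s(f_0,…,f_{m-1},φ,ε,r)` (separated-set version). -/
noncomputable def Qws {ι : Type*} (f : ι → X → X) (φ : X → ℝ) (w : List ι) (ε r : ℝ) : ℝ :=
  sSup {s : ℝ | ∃ E : Finset X, rSep f w ε r E ∧ s = ∑ x ∈ E, Real.exp (Sw f φ w x)}

/-- `Q_n(f_0,…,f_{m-1},φ,ε,r) = (1/m^n) ∑_{|w|=n} Q_w`. -/
noncomputable def Qn {ι : Type*} [Fintype ι] (f : ι → X → X) (φ : X → ℝ)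
    (n : ℕ) (ε r : ℝ) : ℝ :=
  (1 / (Fintype.card ι : ℝ) ^ n) * ∑ σ : Fin n → ι, Qw f φ (List.ofFn σ) ε r

/-- `Q_n^s(f_0,…,f_{m-1},φ,ε,r) = (1/m^n) ∑_{|w|=n} Q_w^s`. -/
noncomputable def Qns {ι : Type*} [Fintype ι] (f : ι → X → X) (φ : X → ℝ)
    (n : ℕ) (ε r : ℝ) : ℝ :=
  (1 / (Fintype.card ι : ℝ) ^ n) * ∑ σ : Fin n → ι, Qws f φ (List.ofFn σ) ε r

/-- The topological `r`-pressure of the free semigroup action (spanning sets);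
the limit as `ε → 0` is realised as a supremum over `ε > 0`, the quantity being
monotone in `ε`. -/
noncomputable def Pr {ι : Type*} [Fintype ι] (f : ι → X → X) (φ : X → ℝ) (r : ℝ) : EReal :=
  ⨆ ε ∈ Set.Ioi (0 : ℝ), atTop.limsup fun n : ℕ =>
    (((n : ℝ)⁻¹ * Real.log (Qn f φ n ε r) : ℝ) : EReal)

/-- `P^s_r(f_0,…,f_{m-1},φ,ε)`, the fixed-`ε` separated-set `r`-pressure. -/
noncomputable def Pse {ι : Type*} [Fintype ι] (f : ι → X → X) (φ : X → ℝ) (ε r : ℝ) : EReal :=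
  atTop.limsup fun n : ℕ => (((n : ℝ)⁻¹ * Real.log (Qns f φ n ε r) : ℝ) : EReal)

/-- The topological `r`-pressure of the free semigroup action (separated sets). -/
noncomputable def Ps {ι : Type*} [Fintype ι] (f : ι → X → X) (φ : X → ℝ) (r : ℝ) : EReal :=
  ⨆ ε ∈ Set.Ioi (0 : ℝ), Pse f φ ε r

/-- Liminf variant of the separated-set topological `r`-pressure. -/
noncomputable def PsInf {ι : Type*} [Fintype ι] (f : ι → X → X) (φ : X → ℝ) (r : ℝ) : EReal :=
  ⨆ ε ∈ Set.Ioi (0 : ℝ), atTop.liminf fun n : ℕ =>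
    (((n : ℝ)⁻¹ * Real.log (Qns f φ n ε r) : ℝ) : EReal)

/-- `F` is a `(w, ε)`-spanning set for the Bowen metric `d_w` of the free semigroup action. -/
def span0 {ι : Type*} (f : ι → X → X) (w : List ι) (ε : ℝ) (F : Finset X) : Prop :=
  ∀ x : X, ∃ y ∈ F, ∀ i < w.length,
    dist (fw f (w.take i) x) (fw f (w.take i) y) ≤ ε

/-- `E` is a `(w, ε)`-separated set for the Bowen metric `d_w`. -/
def sep0 {ι : Type*} (f : ι → X → X) (w : List ι) (ε : ℝ) (E : Finset X) : Prop :=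
  ∀ x ∈ E, ∀ y ∈ E, x ≠ y → ∃ i < w.length,
    ε < dist (fw f (w.take i) x) (fw f (w.take i) y)

noncomputable def Qw0 {ι : Type*} (f : ι → X → X) (φ : X → ℝ) (w : List ι) (ε : ℝ) : ℝ :=
  sInf {s : ℝ | ∃ F : Finset X, span0 f w ε F ∧ s = ∑ x ∈ F, Real.exp (Sw f φ w x)}

noncomputable def Qws0 {ι : Type*} (f : ι → X → X) (φ : X → ℝ) (w : List ι) (ε : ℝ) : ℝ :=
  sSup {s : ℝ | ∃ E : Finset X, sep0 f w ε E ∧ s = ∑ x ∈ E, Real.exp (Sw f φ w x)}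

noncomputable def Qn0 {ι : Type*} [Fintype ι] (f : ι → X → X) (φ : X → ℝ) (n : ℕ) (ε : ℝ) : ℝ :=
  (1 / (Fintype.card ι : ℝ) ^ n) * ∑ σ : Fin n → ι, Qw0 f φ (List.ofFn σ) ε

noncomputable def Qns0 {ι : Type*} [Fintype ι] (f : ι → X → X) (φ : X → ℝ) (n : ℕ) (ε : ℝ) : ℝ :=
  (1 / (Fintype.card ι : ℝ) ^ n) * ∑ σ : Fin n → ι, Qws0 f φ (List.ofFn σ) ε

/-- The topological pressure of the free semigroup action. -/
noncomputable def P0 {ι : Type*} [Fintype ι] (f : ι → X → X) (φ : X → ℝ) : EReal :=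
  ⨆ ε ∈ Set.Ioi (0 : ℝ), atTop.limsup fun n : ℕ =>
    (((n : ℝ)⁻¹ * Real.log (Qn0 f φ n ε) : ℝ) : EReal)

/-- `r_w(ε,r)`: the smallest cardinality of a `(w,ε,r)`-spanning set. -/
noncomputable def rSpanCard {ι : Type*} (f : ι → X → X) (w : List ι) (ε r : ℝ) : ℕ :=
  sInf {k : ℕ | ∃ F : Finset X, rSpan f w ε r F ∧ F.card = k}

/-- The topological `r`-entropy of the free semigroup action. -/
noncomputable def hrEnt {ι : Type*} [Fintype ι] (f : ι → X → X) (r : ℝ) : EReal :=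
  ⨆ ε ∈ Set.Ioi (0 : ℝ), atTop.limsup fun n : ℕ =>
    (((n : ℝ)⁻¹ * Real.log ((1 / (Fintype.card ι : ℝ) ^ n) *
      ∑ σ : Fin n → ι, (rSpanCard f (List.ofFn σ) ε r : ℝ)) : ℝ) : EReal)

end FSG

section Skew

open Filter Topology

-- The metric `d'` on `Σ_m = (ℤ → Fin m)`: `d'(ω,ω') = 2^{-k}` with
-- `k = inf{|n| : ω_n ≠ ω'_n}`.
open Classical in
noncomputable def dSigma (m : ℕ) (ω ω' : ℤ → Fin m) : ℝ :=
  if ω = ω' then 0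
  else (1 / 2) ^ (sInf {k : ℕ | ∃ n : ℤ, n.natAbs = k ∧ ω n ≠ ω' n})

/-- The metric `D = max{d', d}` on `Σ_m × X`. -/
noncomputable def Dmet {X : Type*} [MetricSpace X] (m : ℕ)
    (p q : (ℤ → Fin m) × X) : ℝ :=
  max (dSigma m p.1 q.1) (dist p.2 q.2)

/-- The skew product `F(ω,x) = (σω, f_{ω_0}(x))`. -/
def skew {X : Type*} {m : ℕ} (f : Fin m → X → X) :
    (ℤ → Fin m) × X → (ℤ → Fin m) × X :=
  fun p => (fun n => p.1 (n + 1), f (p.1 0) p.2)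

/-- The inverse skew product `F⁻¹(ω,x) = (σ⁻¹ω, f_{ω_{-1}}⁻¹(x))` (for homeomorphisms). -/
def skewInv {X : Type*} [TopologicalSpace X] {m : ℕ} (f : Fin m → X ≃ₜ X) :
    (ℤ → Fin m) × X → (ℤ → Fin m) × X :=
  fun p => (fun n => p.1 (n - 1), (f (p.1 (-1))).symm p.2)

/-- `g(ω,x) = φ(x)`. -/
def gPot {X : Type*} {m : ℕ} (φ : X → ℝ) : (ℤ → Fin m) × X → ℝ := fun p => φ p.2

/-- `(n,ε,r)`-spanning set for a single map `T` with distance function `ρ`. -/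
def rSpanS {Y : Type*} (ρ : Y → Y → ℝ) (T : Y → Y) (n : ℕ) (ε r : ℝ)
    (F : Finset Y) : Prop :=
  ∀ y : Y, ∃ z ∈ F, (1 - r) * n <
    (((Finset.range n).filter (fun i => ρ (T^[i] y) (T^[i] z) < ε)).card : ℝ)

/-- `Q_n(T, g, ε, r)` for a single map. -/
noncomputable def QnS {Y : Type*} (ρ : Y → Y → ℝ) (T : Y → Y) (g : Y → ℝ)
    (n : ℕ) (ε r : ℝ) : ℝ :=
  sInf {s : ℝ | ∃ F : Finset Y, rSpanS ρ T n ε r F ∧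
    s = ∑ z ∈ F, Real.exp (∑ i ∈ Finset.range n, g (T^[i] z))}

/-- `(n,ε)`-spanning set for a single map. -/
def span0S {Y : Type*} (ρ : Y → Y → ℝ) (T : Y → Y) (n : ℕ) (ε : ℝ)
    (F : Finset Y) : Prop :=
  ∀ y : Y, ∃ z ∈ F, ∀ i < n, ρ (T^[i] y) (T^[i] z) ≤ ε

/-- `(n,ε)`-separated set for a single map. -/
def sep0S {Y : Type*} (ρ : Y → Y → ℝ) (T : Y → Y) (n : ℕ) (ε : ℝ)
    (E : Finset Y) : Prop :=
  ∀ z ∈ E, ∀ z' ∈ E, z ≠ z' → ∃ i < n, ε < ρ (T^[i] z) (T^[i] z')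

noncomputable def Qn0S {Y : Type*} (ρ : Y → Y → ℝ) (T : Y → Y) (g : Y → ℝ)
    (n : ℕ) (ε : ℝ) : ℝ :=
  sInf {s : ℝ | ∃ F : Finset Y, span0S ρ T n ε F ∧
    s = ∑ z ∈ F, Real.exp (∑ i ∈ Finset.range n, g (T^[i] z))}

noncomputable def Qns0S {Y : Type*} (ρ : Y → Y → ℝ) (T : Y → Y) (g : Y → ℝ)
    (n : ℕ) (ε : ℝ) : ℝ :=
  sSup {s : ℝ | ∃ E : Finset Y, sep0S ρ T n ε E ∧
    s = ∑ z ∈ E, Real.exp (∑ i ∈ Finset.range n, g (T^[i] z))}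

/-- The (Walters) topological pressure of a single map `T` with potential `g`,
for the distance function `ρ`. -/
noncomputable def P0S {Y : Type*} (ρ : Y → Y → ℝ) (T : Y → Y) (g : Y → ℝ) : EReal :=
  ⨆ ε ∈ Set.Ioi (0 : ℝ), atTop.limsup fun n : ℕ =>
    (((n : ℝ)⁻¹ * Real.log (Qn0S ρ T g n ε) : ℝ) : EReal)

end Skew

/-! Choose `N` with `2⁻ᴺ < ε`. If two sequences agree on `[-N, n + N)`, their shifts by
`i < n` agree on `[-N, N]`, so at time `i < n` the skew-product orbits of `(ω, x)` and `(ω', y)`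
are `ε`-close for `D` as soon as the fibre orbits of `x` and `y` along the common word
`ω₀ ⋯ ω_{i-1}` are `ε`-close. Hence `(w, ε, r)`-spanning sets `F_w` for the words `w` of length
`n` lift to an `(n, ε, r)`-spanning set of the skew product by attaching to `w` each of the
`m^{2N}` patterns on `[-N, 0) ∪ [n, n + N)`. This multiplies the weighted sum by `m^{2N}`;
taking infima over the `F_w` gives the bound with `K = m^{2N}`. -/

section SkewProductBound

variable {X : Type*}

lemma le_sum_csInf {κ : Type*} [Fintype κ] {S : κ → Set ℝ} (hS : ∀ i, (S i).Nonempty)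
    {a : ℝ} (h : ∀ s : κ → ℝ, (∀ i, s i ∈ S i) → a ≤ ∑ i, s i) :
    a ≤ ∑ i, sInf (S i) := by
  refine le_of_forall_pos_lt_add fun δ hδ => ?_
  set c : ℝ := (Fintype.card κ : ℝ)
  have hδ' : 0 < δ / (c + 1) := by positivity
  choose s hs hlt using fun i => Real.lt_sInf_add_pos (hS i) hδ'
  calc a ≤ ∑ i, s i := h s hs
    _ ≤ ∑ i, (sInf (S i) + δ / (c + 1)) := Finset.sum_le_sum fun i _ => (hlt i).le
    _ = ∑ i, sInf (S i) + c * (δ / (c + 1)) := by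
      rw [Finset.sum_add_distrib, Finset.sum_const, Finset.card_univ, nsmul_eq_mul]
    _ < ∑ i, sInf (S i) + δ := by
      gcongr
      rw [mul_div_assoc', div_lt_iff₀ (by positivity)]
      linarith

lemma exists_finset_forall_dist_lt [TopologicalSpace X] [CompactSpace X] {Y κ : Type*}
    [PseudoMetricSpace Y] [Finite κ] {g : κ → X → Y} (hg : ∀ i, Continuous (g i))
    {ε : ℝ} (hε : 0 < ε) : ∃ F : Finset X, ∀ x, ∃ y ∈ F, ∀ i, dist (g i x) (g i y) < ε := by
  obtain ⟨F, hF⟩ := CompactSpace.elim_nhds_subcover (fun y => {x | ∀ i, dist (g i x) (g i y) < ε})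
    fun y => Filter.eventually_all.2 fun i =>
      (hg i).continuousAt.eventually (Metric.ball_mem_nhds (g i y) hε)
  refine ⟨F, fun x => ?_⟩
  simpa using hF.ge (Set.mem_univ x)

lemma QnS_le_sum {Y : Type*} {ρ : Y → Y → ℝ} {T : Y → Y} {g : Y → ℝ} {n : ℕ} {ε r : ℝ}
    {F : Finset Y} (hF : rSpanS ρ T n ε r F) :
    QnS ρ T g n ε r ≤ ∑ z ∈ F, Real.exp (∑ i ∈ Finset.range n, g (T^[i] z)) :=
  csInf_le ⟨0, by rintro _ ⟨F', -, rfl⟩; positivity⟩ ⟨F, hF, rfl⟩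

lemma fw_append_singleton {ι : Type*} (f : ι → X → X) (w : List ι) (a : ι) (x : X) :
    fw f (w ++ [a]) x = f a (fw f w x) := by
  simp [fw, List.foldl_append]

lemma continuous_fw {ι : Type*} [TopologicalSpace X] {f : ι → X → X}
    (hf : ∀ i, Continuous (f i)) (w : List ι) : Continuous (fw f w) := by
  induction w with
  | nil => exact continuous_id
  | cons a w ih => exact ih.comp (hf a)

lemma ofFn_intCast_eq_take {α : Type*} {n i : ℕ} {ω : ℤ → α} {w : Fin n → α}
    (hw : ∀ j : Fin n, ω j = w j) (hi : i ≤ n) :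
    List.ofFn (fun j : Fin i => ω j) = (List.ofFn w).take i := by
  rw [← Fin.ofFn_take_eq_take_ofFn hi]
  congr 1
  funext j
  exact hw (Fin.castLE hi j)

lemma skew_iterate {m : ℕ} (f : Fin m → X → X) (ω : ℤ → Fin m) (x : X) (i : ℕ) :
    (skew f)^[i] (ω, x) = (fun k => ω (k + i), fw f (List.ofFn fun j : Fin i => ω j) x) := by
  induction i with
  | zero => simp [fw]
  | succ i ih =>
    rw [Function.iterate_succ_apply', ih, List.ofFn_succ', List.concat_eq_append,
      fw_append_singleton]
    simp only [skew, zero_add, Fin.val_castSucc, Fin.val_last, Nat.cast_add, Nat.cast_one]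
    congr 2
    funext k
    ring_nf

lemma sum_gPot_skew_iterate {m n : ℕ} (f : Fin m → X → X) (φ : X → ℝ) {ω : ℤ → Fin m}
    {w : Fin n → Fin m} (hw : ∀ j : Fin n, ω j = w j) (x : X) :
    ∑ i ∈ Finset.range n, gPot φ ((skew f)^[i] (ω, x)) = Sw f φ (List.ofFn w) x := by
  rw [Sw, List.length_ofFn]
  refine Finset.sum_congr rfl fun i hi => ?_
  rw [skew_iterate, gPot, ofFn_intCast_eq_take hw (Finset.mem_range.1 hi).le]

lemma dSigma_lt_of_eqOn {m N : ℕ} {ω ω' : ℤ → Fin m}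
    (h : ∀ k : ℤ, k.natAbs ≤ N → ω k = ω' k) : dSigma m ω ω' < (1 / 2) ^ N := by
  unfold dSigma
  split_ifs with hωω'
  · positivity
  · set S := {k : ℕ | ∃ n : ℤ, n.natAbs = k ∧ ω n ≠ ω' n}
    have hS : S.Nonempty := by
      obtain ⟨k, hk⟩ := Function.ne_iff.1 hωω'
      exact ⟨k.natAbs, k, rfl, hk⟩
    obtain ⟨k, hk, hne⟩ := Nat.sInf_mem hS
    have hN : N < sInf S := by
      by_contra! hle
      exact hne (h k (by omega))
    exact pow_lt_pow_right_of_lt_one₀ (by norm_num) (by norm_num) hN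

def glueSeq {α : Type*} (c : α) {n N : ℕ} (w : Fin n → α) (a b : Fin N → α) : ℤ → α :=
  fun k =>
    if h : 0 ≤ k ∧ k < n then w ⟨k.toNat, by omega⟩
    else if h : -(N : ℤ) ≤ k ∧ k < 0 then a ⟨(k + N).toNat, by omega⟩
    else if h : (n : ℤ) ≤ k ∧ k < n + N then b ⟨(k - n).toNat, by omega⟩
    else c

lemma glueSeq_natCast {α : Type*} (c : α) {n N : ℕ} (w : Fin n → α) (a b : Fin N → α)
    (j : Fin n) : glueSeq c w a b j = w j := by
  rw [glueSeq, dif_pos (by omega)]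
  simp

lemma glueSeq_restrict {α : Type*} (c : α) (n N : ℕ) (ω : ℤ → α) {k : ℤ}
    (hk₀ : -(N : ℤ) ≤ k) (hk₁ : k < n + N) :
    glueSeq c (fun j : Fin n => ω j) (fun j : Fin N => ω (j - N)) (fun j => ω (n + j)) k
      = ω k := by
  unfold glueSeq
  split_ifs <;> first | omega | exact congrArg ω (by simp; omega)

open Classical in
noncomputable def liftSpan {m n : ℕ} (c : Fin m) (N : ℕ) (F : (Fin n → Fin m) → Finset X) :
    Finset ((ℤ → Fin m) × X) :=
  (Finset.univ.sigma fun p : (Fin n → Fin m) × (Fin N → Fin m) × (Fin N → Fin m) => F p.1).image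
    fun q => (glueSeq c q.1.1 q.1.2.1 q.1.2.2, q.2)

lemma sum_liftSpan_le {m n N : ℕ} (c : Fin m) (f : Fin m → X → X) (φ : X → ℝ)
    (F : (Fin n → Fin m) → Finset X) :
    ∑ z ∈ liftSpan c N F, Real.exp (∑ i ∈ Finset.range n, gPot φ ((skew f)^[i] z)) ≤
      (m : ℝ) ^ (2 * N) * ∑ w, ∑ y ∈ F w, Real.exp (Sw f φ (List.ofFn w) y) := by
  classical
  refine (Finset.sum_image_le_of_nonneg fun _ _ => (Real.exp_pos _).le).trans_eq ?_
  rw [Finset.sum_sigma, Fintype.sum_prod_type]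
  simp_rw [sum_gPot_skew_iterate f φ (glueSeq_natCast c _ _ _), Finset.sum_const,
    Finset.card_univ, Fintype.card_prod, Fintype.card_fun, Fintype.card_fin, nsmul_eq_mul,
    ← Finset.mul_sum]
  push_cast
  ring

variable [MetricSpace X]

lemma exists_rSpan [CompactSpace X] {ι : Type*} {f : ι → X → X} (hf : ∀ i, Continuous (f i))
    {w : List ι} (hw : w ≠ []) {ε r : ℝ} (hε : 0 < ε) (hr : 0 < r) :
    ∃ F : Finset X, rSpan f w ε r F := by
  obtain ⟨F, hF⟩ := exists_finset_forall_dist_lt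
    (fun i : Fin w.length => continuous_fw hf (w.take i)) hε
  refine ⟨F, fun x => ?_⟩
  obtain ⟨y, hy, hxy⟩ := hF x
  refine ⟨y, hy, ?_⟩
  rw [Finset.filter_true_of_mem fun i hi => hxy ⟨i, Finset.mem_range.1 hi⟩, Finset.card_range]
  have : (0 : ℝ) < w.length := by exact_mod_cast List.length_pos_iff.2 hw
  nlinarith

lemma Dmet_skew_iterate_lt {m n N : ℕ} (f : Fin m → X → X) {ε : ℝ} (hN : (1 / 2 : ℝ) ^ N ≤ ε)
    {ω ω' : ℤ → Fin m} (hωω' : ∀ k : ℤ, -(N : ℤ) ≤ k → k < n + N → ω k = ω' k)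
    {w : Fin n → Fin m} (hw : ∀ j : Fin n, ω' j = w j) {x y : X} {i : ℕ} (hi : i < n)
    (hxy : dist (fw f ((List.ofFn w).take i) x) (fw f ((List.ofFn w).take i) y) < ε) :
    Dmet m ((skew f)^[i] (ω, x)) ((skew f)^[i] (ω', y)) < ε := by
  have hw' : ∀ j : Fin n, ω j = w j := fun j => (hωω' j (by omega) (by omega)).trans (hw j)
  rw [skew_iterate, skew_iterate, Dmet, ofFn_intCast_eq_take hw' hi.le,
    ofFn_intCast_eq_take hw hi.le]
  exact max_lt ((dSigma_lt_of_eqOn fun k hk => hωω' _ (by omega) (by omega)).trans_le hN) hxy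

lemma rSpanS_liftSpan {m n N : ℕ} (c : Fin m) (f : Fin m → X → X) {ε r : ℝ}
    (hN : (1 / 2 : ℝ) ^ N ≤ ε) {F : (Fin n → Fin m) → Finset X}
    (hF : ∀ w, rSpan f (List.ofFn w) ε r (F w)) :
    rSpanS (Dmet m) (skew f) n ε r (liftSpan c N F) := by
  classical
  rintro ⟨ω, x⟩
  set w : Fin n → Fin m := fun j => ω j
  set ω' := glueSeq c w (fun j : Fin N => ω (j - N)) (fun j => ω (n + j))
  obtain ⟨y, hy, hxy⟩ := hF w x
  refine ⟨(ω', y), Finset.mem_image.2 ⟨⟨(w, _, _), y⟩, Finset.mem_sigma.2 ⟨by simp, hy⟩, rfl⟩, ?_⟩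
  rw [List.length_ofFn] at hxy
  refine hxy.trans_le (Nat.cast_le.2 (Finset.card_le_card fun i hi => ?_))
  rw [Finset.mem_filter, Finset.mem_range] at hi ⊢
  exact ⟨hi.1, Dmet_skew_iterate_lt f hN (fun k hk₀ hk₁ => (glueSeq_restrict c n N ω hk₀ hk₁).symm)
    (glueSeq_natCast c _ _ _) hi.1 hi.2⟩

lemma QnS_skew_le {m n N : ℕ} (c : Fin m) (f : Fin m → X → X) (φ : X → ℝ) {ε r : ℝ}
    (hN : (1 / 2 : ℝ) ^ N ≤ ε) {F : (Fin n → Fin m) → Finset X}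
    (hF : ∀ w, rSpan f (List.ofFn w) ε r (F w)) :
    QnS (Dmet m) (skew f) (gPot φ) n ε r ≤
      (m : ℝ) ^ (2 * N) * ∑ w, ∑ y ∈ F w, Real.exp (Sw f φ (List.ofFn w) y) :=
  (QnS_le_sum (rSpanS_liftSpan c f hN hF)).trans (sum_liftSpan_le c f φ F)

end SkewProductBound

theorem skew_product_Qn_bound_general
    {X : Type*} [MetricSpace X] [CompactSpace X] {m : ℕ}
    (f : Fin m → X → X) (hf : ∀ i, Continuous (f i))
    (φ : X → ℝ) :
    ∀ ε r : ℝ, 0 < ε → 0 < r → r < 1 →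
      ∃ K : ℝ, 0 < K ∧ ∀ n : ℕ, 1 ≤ n →
        QnS (Dmet m) (skew f) (gPot φ) n ε r ≤
          K * (m : ℝ) ^ n * Qn f φ n ε r := by
  intro ε r hε hr _
  obtain rfl | hm := Nat.eq_zero_or_pos m
  · refine ⟨1, one_pos, fun n hn => ?_⟩
    refine (QnS_le_sum (F := ∅) fun p => (p.1 0).elim0).trans ?_
    simp [zero_pow (Nat.one_le_iff_ne_zero.1 hn)]
  obtain ⟨N, hN⟩ := exists_pow_lt_of_lt_one hε (by norm_num : (1 / 2 : ℝ) < 1)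
  have hK : (0 : ℝ) < (m : ℝ) ^ (2 * N) := pow_pos (Nat.cast_pos.2 hm) _
  refine ⟨_, hK, fun n hn => ?_⟩
  have hQn : (m : ℝ) ^ (2 * N) * (m : ℝ) ^ n * Qn f φ n ε r
      = (m : ℝ) ^ (2 * N) * ∑ w : Fin n → Fin m, Qw f φ (List.ofFn w) ε r := by
    rw [Qn, Fintype.card_fin]
    field_simp
  rw [hQn, ← div_le_iff₀' hK]
  refine le_sum_csInf (fun w => ?_) fun s hs => ?_
  · obtain ⟨F, hF⟩ := exists_rSpan hf ((List.ofFn_eq_nil_iff (f := w)).not.2 (by omega)) hε hr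
    exact ⟨_, F, hF, rfl⟩
  · choose F hF hsF using hs
    rw [div_le_iff₀' hK, funext hsF]
    exact QnS_skew_le ⟨0, hm⟩ f φ hN.le hF

theorem skew_product_Qn_bound
    {X : Type*} [MetricSpace X] [CompactSpace X] {m : ℕ}
    (f : Fin m → X → X) (hf : ∀ i, Continuous (f i))
    (φ : X → ℝ) (hφ : Continuous φ) :
    ∀ ε r : ℝ, 0 < ε → 0 < r → r < 1 →
      ∃ K : ℝ, 0 < K ∧ ∀ n : ℕ, 1 ≤ n →
        QnS (Dmet m) (skew f) (gPot φ) n ε r ≤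
          K * (m : ℝ) ^ n * Qn f φ n ε r :=
  skew_product_Qn_bound_general f hf φ
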